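/- Let I ⊆ ℝ be an interval and α : I → C^∞(S¹) a smooth family of positive real-valued functions solving ∂α_τ/∂τ = −α_τ·(Λα_τ) + (𝓗α_τ)·(Dα_τ). Then ∫_{S¹} α_τ(θ)^{-1} dθ is independent of τ. -/

import Mathlib

/-!
With `g_τ = i𝓗α_τ` one has `g_τ' = -Λα_τ` and `α_τ' = i Dα_τ`, so the equation says
`∂α_τ/∂τ = α_τ g_τ' - g_τ α_τ'`, i.e. `∂(α_τ⁻¹)/∂τ = -(g_τ / α_τ)'`. Since `α_τ` is bounded away
from `0` locally uniformly in `τ`, we may differentiate `∫ α_τ⁻¹` under the integral sign; the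
result is the integral over a period of the derivative of the periodic function `g_τ / α_τ`,
which vanishes.
-/

/-- The Fourier mode `e^{inθ}` on the circle. -/
noncomputable def fm (n : ℤ) (θ : ℝ) : ℂ := Complex.exp ((n : ℂ) * (θ : ℂ) * Complex.I)

open Complex Set Filter Topology intervalIntegral

/- `fourierSum (c τ)` is `α_τ`; the coefficient sequences `|n| c τ n`, `sgn n c τ n` and
`n c τ n` give `Λα_τ`, `𝓗α_τ` and `Dα_τ`. -/
noncomputable def fourierSum (d : ℤ → ℂ) (θ : ℝ) : ℂ := ∑' n, d n * fm n θ

lemma norm_fm (n : ℤ) (θ : ℝ) : ‖fm n θ‖ = 1 := by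
  rw [fm, ← ofReal_intCast, ← ofReal_mul, norm_exp_ofReal_mul_I]

lemma norm_mul_fm (z : ℂ) (n : ℤ) (θ : ℝ) : ‖z * fm n θ‖ = ‖z‖ := by
  rw [norm_mul, norm_fm, mul_one]

lemma continuous_fm (n : ℤ) : Continuous (fm n) := by
  unfold fm; fun_prop

lemma periodic_fm (n : ℤ) : Function.Periodic (fm n) (2 * Real.pi) := by
  intro θ
  rw [fm, fm, ofReal_add, mul_add, add_mul, exp_add, ofReal_mul, ofReal_ofNat,
    show (n : ℂ) * (2 * Real.pi) * I = n * (2 * Real.pi * I) by ring, exp_int_mul_two_pi_mul_I,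
    mul_one]

lemma hasDerivAt_fm (n : ℤ) (θ : ℝ) : HasDerivAt (fm n) (n * I * fm n θ) θ := by
  have h := (((hasDerivAt_id θ).ofReal_comp.const_mul (n : ℂ)).mul_const I).cexp
  convert h using 1
  · rfl
  · simp only [fm, id, ofReal_one]; ring

lemma summable_div_one_add_abs_pow (C : ℝ) {k : ℕ} (hk : 2 ≤ k) :
    Summable fun n : ℤ => C / (1 + |(n : ℝ)|) ^ k := by
  refine ((Real.summable_one_div_int_pow.mpr one_lt_two).mul_left |C|).of_norm_bounded_eventually ?_
  filter_upwards [(Set.finite_singleton (0 : ℤ)).compl_mem_cofinite] with n hn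
  have hn : (0 : ℝ) < |(n : ℝ)| := by simpa using hn
  have hw : (0 : ℝ) < 1 + |(n : ℝ)| := by positivity
  rw [norm_div, norm_pow, Real.norm_of_nonneg hw.le, Real.norm_eq_abs, mul_one_div,
    ← sq_abs (n : ℝ)]
  gcongr
  calc |(n : ℝ)| ^ 2 ≤ (1 + |(n : ℝ)|) ^ 2 := by gcongr; linarith
    _ ≤ (1 + |(n : ℝ)|) ^ k := pow_le_pow_right₀ (by linarith) hk

lemma le_div_of_pow_mul_add_le {x y C : ℝ} {n : ℤ} {m : ℕ} (hx : 0 ≤ x) (hy : 0 ≤ y)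
    (h : (1 + |n| : ℝ) ^ m * (x + y) ≤ C) :
    x ≤ C / (1 + |(n : ℝ)|) ^ m ∧ y ≤ C / (1 + |(n : ℝ)|) ^ m := by
  rw [Int.cast_abs] at h
  have hw : 0 < (1 + |(n : ℝ)|) ^ m := by positivity
  rw [le_div_iff₀ hw, le_div_iff₀ hw]
  constructor <;> nlinarith

section FourierSum

variable {d : ℤ → ℂ} {u : ℤ → ℝ}

lemma summable_fourierSum (hd : ∀ n, ‖d n‖ ≤ u n) (hu : Summable u) (θ : ℝ) :
    Summable fun n => d n * fm n θ :=
  hu.of_norm_bounded fun n => (norm_mul_fm _ n θ).trans_le (hd n)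

lemma norm_fourierSum_le (hd : ∀ n, ‖d n‖ ≤ u n) (hu : Summable u) (θ : ℝ) :
    ‖fourierSum d θ‖ ≤ ∑' n, u n :=
  tsum_of_norm_bounded hu.hasSum fun n => (norm_mul_fm _ n θ).trans_le (hd n)

lemma continuous_fourierSum (hd : ∀ n, ‖d n‖ ≤ u n) (hu : Summable u) :
    Continuous (fourierSum d) :=
  continuous_tsum (fun n => continuous_const.mul (continuous_fm n)) hu
    fun n θ => (norm_mul_fm _ n θ).trans_le (hd n)

lemma periodic_fourierSum (d : ℤ → ℂ) : Function.Periodic (fourierSum d) (2 * Real.pi) :=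
  fun θ => tsum_congr fun n => by rw [periodic_fm n θ]

lemma hasDerivAt_fourierSum {C : ℝ} (hd : ∀ n, ‖d n‖ ≤ C / (1 + |(n : ℝ)|) ^ 3) (θ : ℝ) :
    HasDerivAt (fourierSum d) (I * fourierSum (fun n => n * d n) θ) θ := by
  have hderiv := hasDerivAt_tsum (summable_div_one_add_abs_pow C le_rfl)
    (fun n y => (hasDerivAt_fm n y).const_mul (d n)) (fun n y => ?_)
    (summable_fourierSum hd (summable_div_one_add_abs_pow C (by norm_num)) θ) θ
  · refine hderiv.congr_deriv ?_
    rw [fourierSum, ← tsum_mul_left]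
    exact tsum_congr fun n => by ring
  · have hw : (0 : ℝ) < 1 + |(n : ℝ)| := by positivity
    calc ‖d n * (n * I * fm n y)‖ = ‖d n‖ * |(n : ℝ)| := by
          rw [← mul_assoc, norm_mul_fm, norm_mul, norm_mul, norm_I, mul_one, norm_intCast]
      _ ≤ C / (1 + |(n : ℝ)|) ^ 3 * (1 + |(n : ℝ)|) :=
          mul_le_mul (hd n) (by linarith) (abs_nonneg _) ((norm_nonneg _).trans (hd n))
      _ = C / (1 + |(n : ℝ)|) ^ 2 := by field_simp

end FourierSum

lemma norm_intSign_le (n : ℤ) : ‖(Int.sign n : ℂ)‖ ≤ 1 := by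
  rcases Int.sign_trichotomy n with h | h | h <;> simp [h]

lemma intCast_mul_sign (n : ℤ) : (n : ℂ) * Int.sign n = ((|n| : ℤ) : ℂ) := by
  rw [← Int.cast_mul, Int.mul_sign_self, Int.abs_eq_natAbs]

lemma hasDerivAt_hilbert_div_fourierSum {d : ℤ → ℂ} {C : ℝ}
    (hd : ∀ n, ‖d n‖ ≤ C / (1 + |(n : ℝ)|) ^ 3) {θ : ℝ} (hne : fourierSum d θ ≠ 0) :
    HasDerivAt (fun θ => I * fourierSum (fun n => Int.sign n * d n) θ / fourierSum d θ)
      ((-fourierSum d θ * fourierSum (fun n => ((|n| : ℤ) : ℂ) * d n) θ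
          + fourierSum (fun n => Int.sign n * d n) θ * fourierSum (fun n => n * d n) θ)
        / fourierSum d θ ^ 2) θ := by
  have hsign : ∀ n, ‖(Int.sign n : ℂ) * d n‖ ≤ C / (1 + |(n : ℝ)|) ^ 3 := fun n =>
    (norm_mul_le _ _).trans <|
      (mul_le_of_le_one_left (norm_nonneg _) (norm_intSign_le n)).trans (hd n)
  have hg := (hasDerivAt_fourierSum hsign θ).const_mul I
  simp_rw [← mul_assoc, intCast_mul_sign] at hg
  refine (hg.div (hasDerivAt_fourierSum hd θ) hne).congr_deriv ?_
  congr 1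
  linear_combination (fourierSum d θ * fourierSum (fun n => ((|n| : ℤ) : ℂ) * d n) θ
    - fourierSum (fun n => Int.sign n * d n) θ * fourierSum (fun n => n * d n) θ) * I_sq

lemma integral_deriv_eq_zero_of_periodic {E : Type*} [NormedAddCommGroup E] [NormedSpace ℝ E]
    [CompleteSpace E] {f f' : ℝ → E} {T : ℝ} (hf : Function.Periodic f T)
    (hderiv : ∀ x, HasDerivAt f (f' x) x) (hint : IntervalIntegrable f' MeasureTheory.volume 0 T) :
    ∫ x in 0..T, f' x = 0 := by
  rw [integral_eq_sub_of_hasDerivAt (fun x _ => hderiv x) hint, hf.eq, sub_self]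

lemma exists_eventually_norm_inv_le {f : ℝ → ℝ → ℂ} {s K : Set ℝ} (hs : IsOpen s)
    (hK : IsCompact K) (hf : ContinuousOn (Function.uncurry f) (s ×ˢ K))
    (hne : ∀ t ∈ s, ∀ θ ∈ K, f t θ ≠ 0) {τ : ℝ} (hτ : τ ∈ s) :
    ∃ M, ∀ᶠ t in 𝓝 τ, ∀ θ ∈ K, ‖(f t θ)⁻¹‖ ≤ M := by
  obtain ⟨ε, hε, hball⟩ := Metric.nhds_basis_closedBall.mem_iff.mp (hs.mem_nhds hτ)
  have hsub : Metric.closedBall τ ε ×ˢ K ⊆ s ×ˢ K := prod_mono hball subset_rfl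
  obtain ⟨M, hM⟩ := ((isCompact_closedBall τ ε).prod hK).exists_bound_of_continuousOn
    ((hf.mono hsub).inv₀ fun p hp => hne p.1 (hsub hp).1 p.2 hp.2)
  exact ⟨M, eventually_of_mem (Metric.closedBall_mem_nhds τ hε) fun t ht θ hθ =>
    hM (t, θ) ⟨ht, hθ⟩⟩

section Family

variable {s : Set ℝ} {c c' : ℝ → ℤ → ℂ} {u : ℤ → ℝ}

lemma continuousOn_uncurry_fourierSum (hc : ∀ n, ContinuousOn (fun t => c t n) s)
    (hbd : ∀ t ∈ s, ∀ n, ‖c t n‖ ≤ u n) (hu : Summable u) :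
    ContinuousOn (Function.uncurry fun t θ => fourierSum (c t) θ) (s ×ˢ univ) :=
  continuousOn_tsum (fun n => ((hc n).comp continuousOn_fst fun _ hp => hp.1).mul
      ((continuous_fm n).comp continuous_snd).continuousOn) hu
    fun n p hp => (norm_mul_fm _ n p.2).trans_le (hbd p.1 hp.1 n)

lemma hasDerivAt_fourierSum_param (hs : IsOpen s) (hs' : IsPreconnected s)
    (hderiv : ∀ t ∈ s, ∀ n, HasDerivAt (fun t => c t n) (c' t n) t)
    (hbd : ∀ t ∈ s, ∀ n, ‖c t n‖ ≤ u n) (hbd' : ∀ t ∈ s, ∀ n, ‖c' t n‖ ≤ u n)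
    (hu : Summable u) {t : ℝ} (ht : t ∈ s) (θ : ℝ) :
    HasDerivAt (fun t => fourierSum (c t) θ) (fourierSum (c' t) θ) t :=
  hasDerivAt_tsum_of_isPreconnected hu hs hs' (fun n y hy => (hderiv y hy n).mul_const (fm n θ))
    (fun n y hy => (norm_mul_fm _ n θ).trans_le (hbd' y hy n)) ht
    (summable_fourierSum (hbd t ht) hu θ) ht

lemma hasDerivAt_integral_inv_fourierSum (hs : IsOpen s) (hs' : IsPreconnected s)
    (hderiv : ∀ t ∈ s, ∀ n, HasDerivAt (fun t => c t n) (c' t n) t)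
    (hbd : ∀ t ∈ s, ∀ n, ‖c t n‖ ≤ u n) (hbd' : ∀ t ∈ s, ∀ n, ‖c' t n‖ ≤ u n)
    (hu : Summable u) (hne : ∀ t ∈ s, ∀ θ, fourierSum (c t) θ ≠ 0) {τ : ℝ} (hτ : τ ∈ s) :
    HasDerivAt (fun t => ∫ θ in 0..2 * Real.pi, (fourierSum (c t) θ)⁻¹)
      (∫ θ in 0..2 * Real.pi, -fourierSum (c' τ) θ / fourierSum (c τ) θ ^ 2) τ := by
  have hcont : ∀ t ∈ s, Continuous (fourierSum (c t)) := fun t ht =>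
    continuous_fourierSum (hbd t ht) hu
  obtain ⟨M, hM⟩ := exists_eventually_norm_inv_le hs isCompact_Icc
    ((continuousOn_uncurry_fourierSum
      (fun n t ht => (hderiv t ht n).continuousAt.continuousWithinAt) hbd hu).mono
      (prod_mono subset_rfl (subset_univ (Icc 0 (2 * Real.pi)))))
    (fun t ht θ _ => hne t ht θ) hτ
  refine (hasDerivAt_integral_of_dominated_loc_of_deriv_le
    (F := fun t θ => (fourierSum (c t) θ)⁻¹)
    (F' := fun t θ => -fourierSum (c' t) θ / fourierSum (c t) θ ^ 2)
    (bound := fun _ => (∑' n, u n) * M ^ 2) (Eventually.and (hs.mem_nhds hτ) hM) ?_ ?_ ?_ ?_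
    intervalIntegrable_const ?_).2
  · exact eventually_of_mem (hs.mem_nhds hτ) fun t ht =>
      ((hcont t ht).inv₀ (hne t ht)).aestronglyMeasurable
  · exact ((hcont τ hτ).inv₀ (hne τ hτ)).intervalIntegrable _ _
  · exact ((continuous_fourierSum (hbd' τ hτ) hu).neg.div ((hcont τ hτ).pow 2)
      fun θ => pow_ne_zero 2 (hne τ hτ θ)).aestronglyMeasurable
  · refine MeasureTheory.ae_of_all _ fun θ hθ t ⟨ht, htM⟩ => ?_
    rw [uIoc_of_le (by positivity)] at hθ
    have hnum := norm_fourierSum_le (hbd' t ht) hu θ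
    rw [norm_div, norm_neg, norm_pow, div_eq_mul_inv, ← inv_pow, ← norm_inv]
    exact mul_le_mul hnum (pow_le_pow_left₀ (norm_nonneg _) (htM θ (Ioc_subset_Icc_self hθ)) 2)
      (by positivity) ((norm_nonneg _).trans hnum)
  · exact MeasureTheory.ae_of_all _ fun θ _ t ht =>
      (hasDerivAt_fourierSum_param hs hs' hderiv hbd hbd' hu ht.1 θ).inv (hne t ht.1 θ)

end Family

lemma integral_neg_div_sq_fourierSum_eq_zero {d e : ℤ → ℂ} {C : ℝ}
    (hd : ∀ n, ‖d n‖ ≤ C / (1 + |(n : ℝ)|) ^ 3) (he : Continuous (fourierSum e))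
    (hne : ∀ θ, fourierSum d θ ≠ 0)
    (heq : ∀ θ, fourierSum e θ =
      -fourierSum d θ * fourierSum (fun n => ((|n| : ℤ) : ℂ) * d n) θ
        + fourierSum (fun n => Int.sign n * d n) θ * fourierSum (fun n => n * d n) θ) :
    ∫ θ in 0..2 * Real.pi, -fourierSum e θ / fourierSum d θ ^ 2 = 0 := by
  have hcont := continuous_fourierSum hd (summable_div_one_add_abs_pow C (by norm_num))
  refine integral_deriv_eq_zero_of_periodic
    (f := fun θ => -(I * fourierSum (fun n => Int.sign n * d n) θ / fourierSum d θ))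
    (fun θ => ?_) (fun θ => ?_) ?_
  · simp only [periodic_fourierSum _ θ]
  · rw [neg_div, heq θ]
    exact (hasDerivAt_hilbert_div_fourierSum hd (hne θ)).neg
  · exact (he.neg.div (hcont.pow 2) fun θ => pow_ne_zero 2 (hne θ)).intervalIntegrable _ _

theorem stmt_12_general (a b : ℝ) (c c' : ℝ → ℤ → ℂ)
    (hbound : ∀ m : ℕ, ∃ C : ℝ, ∀ τ ∈ Set.Ioo a b, ∀ n : ℤ,
      ((1 + |n| : ℝ)) ^ m * (‖c τ n‖ + ‖c' τ n‖) ≤ C)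
    (hderiv : ∀ τ ∈ Set.Ioo a b, ∀ n : ℤ, HasDerivAt (fun t => c t n) (c' τ n) τ)
    (hpos : ∀ τ ∈ Set.Ioo a b, ∀ θ : ℝ, 0 < (∑' n : ℤ, c τ n * fm n θ).re)
    (hPDE : ∀ τ ∈ Set.Ioo a b, ∀ θ : ℝ,
      (∑' n : ℤ, c' τ n * fm n θ) =
        -(∑' n : ℤ, c τ n * fm n θ) * (∑' n : ℤ, ((|n| : ℤ) : ℂ) * c τ n * fm n θ)
          + (∑' n : ℤ, (Int.sign n : ℂ) * c τ n * fm n θ) *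
            (∑' n : ℤ, (n : ℂ) * c τ n * fm n θ)) :
    ∀ τ₁ ∈ Set.Ioo a b, ∀ τ₂ ∈ Set.Ioo a b,
      (∫ θ in (0:ℝ)..(2 * Real.pi), (∑' n : ℤ, c τ₁ n * fm n θ)⁻¹) =
        ∫ θ in (0:ℝ)..(2 * Real.pi), (∑' n : ℤ, c τ₂ n * fm n θ)⁻¹ := by
  obtain ⟨C, hC⟩ := hbound 3
  have hdecay : ∀ t ∈ Ioo a b, ∀ n : ℤ,
      ‖c t n‖ ≤ C / (1 + |(n : ℝ)|) ^ 3 ∧ ‖c' t n‖ ≤ C / (1 + |(n : ℝ)|) ^ 3 :=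
    fun t ht n => le_div_of_pow_mul_add_le (norm_nonneg _) (norm_nonneg _) (hC t ht n)
  have hu := summable_div_one_add_abs_pow C (k := 3) (by norm_num)
  have hne : ∀ t ∈ Ioo a b, ∀ θ, fourierSum (c t) θ ≠ 0 := fun t ht θ h => by
    have hre : 0 < (fourierSum (c t) θ).re := hpos t ht θ
    simp [h] at hre
  have hF : ∀ τ ∈ Ioo a b,
      HasDerivAt (fun t => ∫ θ in 0..2 * Real.pi, (fourierSum (c t) θ)⁻¹) 0 τ := by
    intro τ hτ
    have h := hasDerivAt_integral_inv_fourierSum isOpen_Ioo isPreconnected_Ioo hderiv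
      (fun t ht n => (hdecay t ht n).1) (fun t ht n => (hdecay t ht n).2) hu hne hτ
    rwa [integral_neg_div_sq_fourierSum_eq_zero (fun n => (hdecay τ hτ n).1)
      (continuous_fourierSum (fun n => (hdecay τ hτ n).2) hu) (hne τ hτ) (hPDE τ hτ)] at h
  intro τ₁ h₁ τ₂ h₂
  exact isOpen_Ioo.is_const_of_deriv_eq_zero isPreconnected_Ioo
    (fun t ht => (hF t ht).differentiableAt.differentiableWithinAt) (fun t ht => (hF t ht).deriv)
    h₁ h₂

theorem stmt_12 (a b : ℝ) (c c' : ℝ → ℤ → ℂ)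
    (hreal : ∀ τ ∈ Set.Ioo a b, ∀ n : ℤ, c τ (-n) = (starRingEnd ℂ) (c τ n))
    (hbound : ∀ m : ℕ, ∃ C : ℝ, ∀ τ ∈ Set.Ioo a b, ∀ n : ℤ,
      ((1 + |n| : ℝ)) ^ m * (‖c τ n‖ + ‖c' τ n‖) ≤ C)
    (hderiv : ∀ τ ∈ Set.Ioo a b, ∀ n : ℤ, HasDerivAt (fun t => c t n) (c' τ n) τ)
    (hpos : ∀ τ ∈ Set.Ioo a b, ∀ θ : ℝ, 0 < (∑' n : ℤ, c τ n * fm n θ).re)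
    (hPDE : ∀ τ ∈ Set.Ioo a b, ∀ θ : ℝ,
      (∑' n : ℤ, c' τ n * fm n θ) =
        -(∑' n : ℤ, c τ n * fm n θ) * (∑' n : ℤ, ((|n| : ℤ) : ℂ) * c τ n * fm n θ)
          + (∑' n : ℤ, (Int.sign n : ℂ) * c τ n * fm n θ) *
            (∑' n : ℤ, (n : ℂ) * c τ n * fm n θ)) :
    ∀ τ₁ ∈ Set.Ioo a b, ∀ τ₂ ∈ Set.Ioo a b,
      (∫ θ in (0:ℝ)..(2 * Real.pi), (∑' n : ℤ, c τ₁ n * fm n θ)⁻¹) =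
        ∫ θ in (0:ℝ)..(2 * Real.pi), (∑' n : ℤ, c τ₂ n * fm n θ)⁻¹ :=
  stmt_12_general a b c c' hbound hderiv hpos hPDE
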